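/- arXiv:1509.05751 — 3 statements merged into one kernel-verified Lean document; each statement's English description precedes it below -/
import Mathlib

section
/- Let Y = {a_1, ..., a_n} be a multiset of positive integers with sum ā = Σ a_i, and define a_i' = a_i + ā. If X = {a_1', ..., a_n'} can be partitioned into m multisets each with equal sum, then every multiset in the partition has exactly n/m elements. -/
private lemma my_card_sum (P : Multiset (Multiset ℕ)) :
    P.sum.card = (P.map Multiset.card).sum := by
  induction P using Multiset.induction with
  | empty => simp
  | cons a s ih => simp [ih]

private lemma my_sum_sum (P : Multiset (Multiset ℕ)) :
    P.sum.sum = (P.map Multiset.sum).sum := by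
  induction P using Multiset.induction with
  | empty => simp
  | cons a s ih => simp [ih]

private lemma my_sum_mono {s t : Multiset ℕ} (h : s ≤ t) : s.sum ≤ t.sum := by
  obtain ⟨u, rfl⟩ := Multiset.le_iff_exists_add.mp h
  simp

private lemma my_card_le_sum (s : Multiset ℕ) (h : ∀ x ∈ s, 0 < x) :
    s.card ≤ s.sum := by
  induction s using Multiset.induction with
  | empty => simp
  | cons a s ih =>
      simp only [Multiset.card_cons, Multiset.sum_cons]
      have h1 : 0 < a := h a (Multiset.mem_cons_self a s)
      have h2 := ih (fun x hx => h x (Multiset.mem_cons_of_mem hx))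
      omega

private lemma my_sum_const (s : Multiset ℕ) (c : ℕ) (h : ∀ x ∈ s, x = c) :
    s.sum = s.card * c := by
  induction s using Multiset.induction with
  | empty => simp
  | cons a s ih =>
      simp only [Multiset.sum_cons, Multiset.card_cons]
      rw [h a (Multiset.mem_cons_self a s),
        ih (fun x hx => h x (Multiset.mem_cons_of_mem hx))]
      ring

/-- key arithmetic fact -/
private lemma my_key {abar k₁ r₁ k₂ r₂ : ℕ} (h : k₁ * abar + r₁ = k₂ * abar + r₂)
    (h1 : 1 ≤ r₁) (h1' : r₁ ≤ abar) (h2 : 1 ≤ r₂) (h2' : r₂ ≤ abar) : k₁ = k₂ := by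
  rcases lt_trichotomy k₁ k₂ with hlt | he | hgt
  · exfalso
    have : (k₁ + 1) * abar ≤ k₂ * abar := Nat.mul_le_mul_right abar hlt
    nlinarith
  · exact he
  · exfalso
    have : (k₂ + 1) * abar ≤ k₁ * abar := Nat.mul_le_mul_right abar hgt
    nlinarith

/-- If `X = {a + ā | a ∈ Y}` (with `ā = Y.sum`) is partitioned into `m`
multisets with equal sums, then every part has exactly `n / m` elements
(expressed as `Z.card * m = Y.card`). -/
theorem stmt_0 (Y : Multiset ℕ) (hpos : ∀ a ∈ Y, 0 < a)
    (m : ℕ) (hm : 0 < m)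
    (P : Multiset (Multiset ℕ)) (hPcard : P.card = m)
    (hPunion : P.sum = Y.map (fun a => a + Y.sum))
    (hPeq : ∀ Z ∈ P, ∀ W ∈ P, Z.sum = W.sum) :
    ∀ Z ∈ P, Z.card * m = Y.card := by
  intro Z₀ hZ₀
  set abar := Y.sum with habar
  set n := Y.card with hn
  -- every part is ≤ X
  have hle : ∀ Z ∈ P, Z ≤ Y.map (fun a => a + abar) := by
    intro Z hZ
    rw [← hPunion]
    exact Multiset.single_le_sum (fun x _ => bot_le) Z hZ
  by_cases hY : abar = 0
  · -- Y must be empty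
    have hY0 : Y = 0 := by
      by_contra h
      obtain ⟨a, ha⟩ := Multiset.exists_mem_of_ne_zero h
      have := hpos a ha
      have : a ≤ abar := Multiset.single_le_sum (fun x _ => Nat.zero_le x) a ha
      omega
    have : Z₀ ≤ 0 := by simpa [hY0] using hle Z₀ hZ₀
    have hZ0 : Z₀ = 0 := le_bot_iff.mp this
    simp [hZ0, hn, hY0]
  · -- abar > 0
    have habar1 : 1 ≤ abar := Nat.one_le_iff_ne_zero.mpr hY
    -- decomposition of each part
    have hdecomp : ∀ Z ∈ P, ∃ r, Z.sum = Z.card * abar + r ∧ Z.card ≤ r ∧ r ≤ abar := by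
      intro Z hZ
      set W := Z.map (fun x => x - abar) with hW
      have hWle : W ≤ Y := by
        have h1 : W ≤ (Y.map (fun a => a + abar)).map (fun x => x - abar) :=
          Multiset.map_le_map (hle Z hZ)
        have h2 : (Y.map (fun a => a + abar)).map (fun x => x - abar) = Y := by
          rw [Multiset.map_map]
          simp
        rwa [h2] at h1
      have hZW : Z = W.map (fun a => a + abar) := by
        have hpt : ∀ x ∈ Z, ((fun a => a + abar) ∘ fun x => x - abar) x = id x := by
          intro x hx
          have hx' := Multiset.mem_of_le (hle Z hZ) hx
          simp only [Multiset.mem_map] at hx'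
          obtain ⟨a, _, rfl⟩ := hx'
          simp only [Function.comp_apply, id_eq]
          omega
        have hmc : Multiset.map ((fun a => a + abar) ∘ fun x => x - abar) Z
            = Multiset.map id Z := Multiset.map_congr rfl hpt
        rw [Multiset.map_id] at hmc
        rw [hW, Multiset.map_map, hmc]
      refine ⟨W.sum, ?_, ?_, my_sum_mono hWle⟩
      · rw [hZW, Multiset.sum_map_add]
        have hcard : W.card = Z.card := by rw [hW, Multiset.card_map]
        simp [hcard, my_sum_const (W.map (fun _ => abar)) abar
          (by intro x hx; simp only [Multiset.mem_map] at hx; obtain ⟨a, _, rfl⟩ := hx; rfl)]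
        ring
      · have hcard : W.card = Z.card := by rw [hW, Multiset.card_map]
        rw [← hcard]
        exact my_card_le_sum W (fun x hx => hpos x (Multiset.mem_of_le hWle hx))
    -- total sum
    have htot : (P.map Multiset.sum).sum = (n + 1) * abar := by
      rw [← my_sum_sum, hPunion, Multiset.sum_map_add]
      simp [my_sum_const (Y.map (fun _ => abar)) abar
        (by intro x hx; simp only [Multiset.mem_map] at hx; obtain ⟨a, _, rfl⟩ := hx; rfl),
        ← habar, ← hn]
      ring
    -- each part is nonempty
    have hne : ∀ Z ∈ P, Z ≠ 0 := by
      intro Z hZ hc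
      have hall : ∀ S ∈ P.map Multiset.sum, S = 0 := by
        intro S hS
        simp only [Multiset.mem_map] at hS
        obtain ⟨W, hW, rfl⟩ := hS
        rw [hPeq W hW Z hZ, hc]
        simp
      have := my_sum_const (P.map Multiset.sum) 0 hall
      rw [htot] at this
      simp at this
      omega
    -- all parts have the same card as Z₀
    have hsamecard : ∀ Z ∈ P, Z.card = Z₀.card := by
      intro Z hZ
      obtain ⟨r, hr, hr1, hr2⟩ := hdecomp Z hZ
      obtain ⟨r₀, hr₀, hr₀1, hr₀2⟩ := hdecomp Z₀ hZ₀
      have hsum : Z.sum = Z₀.sum := hPeq Z hZ Z₀ hZ₀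
      rw [hr, hr₀] at hsum
      have hZne : 0 < Z.card := Multiset.card_pos.mpr (hne Z hZ)
      have hZ₀ne : 0 < Z₀.card := Multiset.card_pos.mpr (hne Z₀ hZ₀)
      exact my_key hsum (by omega) hr2 (by omega) hr₀2
    -- counting
    have hcount : n = Z₀.card * m := by
      have h1 : (Y.map (fun a => a + abar)).card = n := by simp [← hn]
      have h2 : (P.map Multiset.card).sum = n := by
        rw [← my_card_sum, hPunion, h1]
      have h3 : (P.map Multiset.card).sum = m * Z₀.card := by
        rw [my_sum_const (P.map Multiset.card) Z₀.card ?_, Multiset.card_map, hPcard]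
        intro x hx
        simp only [Multiset.mem_map] at hx
        obtain ⟨W, hW, rfl⟩ := hx
        exact hsamecard W hW
      rw [← h2, h3, Nat.mul_comm]
    omega
end

section
/- Let Y = {a_1, ..., a_{3m}} be a multiset of positive integers and let ā = Σ a_i, assumed divisible by m. Set a_i' = a_i + ā and X = {a_1', ..., a_{3m}'}. Then Y admits a partition into m multisets of size 3 each with equal sum if and only if X admits a partition into m multisets each with equal sum. -/
private lemma map_add_sum (S : ℕ) (W : Multiset ℕ) :
    (W.map (fun a => a + S)).sum = W.sum + W.card * S := by
  induction W using Multiset.induction with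
  | empty => simp
  | cons a s ih => simp [ih]; ring

private lemma sum_map_mmap (f : ℕ → ℕ) (P : Multiset (Multiset ℕ)) :
    (P.map (Multiset.map f)).sum = P.sum.map f := by
  induction P using Multiset.induction with
  | empty => simp
  | cons a s ih => simp [ih]

private lemma sum_map_sum (P : Multiset (Multiset ℕ)) :
    (P.map Multiset.sum).sum = P.sum.sum := by
  induction P using Multiset.induction with
  | empty => simp
  | cons a s ih => simp [ih]

private lemma card_msum (P : Multiset (Multiset ℕ)) :
    Multiset.card P.sum = (P.map Multiset.card).sum := by
  induction P using Multiset.induction with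
  | empty => simp
  | cons a s ih => simp [ih]

private lemma all_eq_of_sum_eq (s : Multiset ℕ) (c : ℕ) (h : ∀ x ∈ s, x ≤ c)
    (hs : s.sum = s.card * c) : ∀ x ∈ s, x = c := by
  induction s using Multiset.induction with
  | empty => simp
  | cons a t ih =>
    have hle : t.sum ≤ t.card * c := by
      simpa [smul_eq_mul] using
        Multiset.sum_le_card_nsmul t c (fun x hx => h x (Multiset.mem_cons_of_mem hx))
    have ha : a ≤ c := h a (Multiset.mem_cons_self a t)
    have hs2 : a + t.sum = t.card * c + c := by
      simp only [Multiset.sum_cons, Multiset.card_cons] at hs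
      rw [hs]; ring
    have hac : a = c := by omega
    have ht : t.sum = t.card * c := by omega
    intro x hx
    rcases Multiset.mem_cons.1 hx with rfl | hx
    · exact hac
    · exact ih (fun y hy => h y (Multiset.mem_cons_of_mem hy)) ht x hx

/-- the reduction from 3-PARTITION to BAL-PART.  `Y` (of size `3m`, sum
divisible by `m`) admits a partition into `m` triples of equal sums iff
`X = {a + ā | a ∈ Y}` admits a partition into `m` multisets of equal sums. -/
theorem stmt_1 (m : ℕ) (hm : 0 < m) (Y : Multiset ℕ) (hpos : ∀ a ∈ Y, 0 < a)
    (hcard : Y.card = 3 * m) (hdvd : m ∣ Y.sum) :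
    (∃ P : Multiset (Multiset ℕ), P.card = m ∧ P.sum = Y ∧
      (∀ Z ∈ P, Z.card = 3) ∧ ∀ Z ∈ P, ∀ W ∈ P, Z.sum = W.sum) ↔
    (∃ P : Multiset (Multiset ℕ), P.card = m ∧ P.sum = Y.map (fun a => a + Y.sum) ∧
      ∀ Z ∈ P, ∀ W ∈ P, Z.sum = W.sum) := by
  set S := Y.sum with hS
  constructor
  · rintro ⟨P, hPcard, hPsum, hP3, hPeq⟩
    refine ⟨P.map (Multiset.map (fun a => a + S)), by simp [hPcard], ?_, ?_⟩
    · rw [sum_map_mmap, hPsum]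
    · intro Z hZ W hW
      obtain ⟨Z0, hZ0, rfl⟩ := Multiset.mem_map.1 hZ
      obtain ⟨W0, hW0, rfl⟩ := Multiset.mem_map.1 hW
      rw [map_add_sum, map_add_sum, hP3 Z0 hZ0, hP3 W0 hW0, hPeq Z0 hZ0 W0 hW0]
  · rintro ⟨P, hPcard, hPsum, hPeq⟩
    -- S > 0
    have hYne : Y ≠ 0 := by
      intro h; rw [h] at hcard; simp at hcard; omega
    obtain ⟨a0, ha0⟩ := Multiset.exists_mem_of_ne_zero hYne
    have hSpos : 0 < S := lt_of_lt_of_le (hpos a0 ha0) (Multiset.le_sum_of_mem ha0)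
    obtain ⟨c, hc⟩ := hdvd
    have hcpos : 0 < c := by
      rcases Nat.eq_zero_or_pos c with h | h
      · rw [h, Nat.mul_zero] at hc; omega
      · exact h
    -- elements of X are between S+1 and 2S
    have hXmem : ∀ x ∈ Y.map (fun a => a + S), S + 1 ≤ x ∧ x ≤ 2 * S := by
      intro x hx
      obtain ⟨a, ha, rfl⟩ := Multiset.mem_map.1 hx
      have h1 := hpos a ha
      have h2 : a ≤ S := Multiset.le_sum_of_mem ha
      omega
    -- common sum t
    have hPne : P ≠ 0 := by
      intro h; rw [h] at hPcard; simp at hPcard; omega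
    obtain ⟨Z0, hZ0⟩ := Multiset.exists_mem_of_ne_zero hPne
    set t := Z0.sum with ht
    have hsumt : ∀ Z ∈ P, Z.sum = t := fun Z hZ => hPeq Z hZ Z0 hZ0
    -- total sum
    have hXsum : (Y.map (fun a => a + S)).sum = S * (3 * m + 1) := by
      rw [map_add_sum, hcard, ← hS]; ring
    have hmt : m * t = S * (3 * m + 1) := by
      have : P.map Multiset.sum = Multiset.replicate m t :=
        Multiset.eq_replicate.2 ⟨by simp [hPcard], by
          intro b hb; obtain ⟨Z, hZ, rfl⟩ := Multiset.mem_map.1 hb; exact hsumt Z hZ⟩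
      have h2 : (P.map Multiset.sum).sum = (Y.map (fun a => a + S)).sum := by
        rw [sum_map_sum, hPsum]
      rw [this, Multiset.sum_replicate, smul_eq_mul, hXsum] at h2
      exact h2
    have htval : t = 3 * S + c := by
      have : m * t = m * (3 * S + c) := by rw [hmt, hc]; ring
      exact Nat.eq_of_mul_eq_mul_left hm this
    have hcS : c ≤ S := by
      rw [hc]; exact Nat.le_mul_of_pos_left c hm
    -- elements of each part
    have hZel : ∀ Z ∈ P, ∀ x ∈ Z, S + 1 ≤ x ∧ x ≤ 2 * S := by
      intro Z hZ x hx
      exact hXmem x (by rw [← hPsum]; exact Multiset.mem_of_le (Multiset.le_sum_of_mem hZ) hx)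
    -- each part has card ≤ 3
    have hcardle : ∀ Z ∈ P, Z.card ≤ 3 := by
      intro Z hZ
      by_contra h
      have h4 : 4 ≤ Z.card := by omega
      have : Z.card • (S + 1) ≤ Z.sum :=
        Multiset.card_nsmul_le_sum (fun x hx => (hZel Z hZ x hx).1)
      rw [hsumt Z hZ, htval] at this
      have : Z.card * (S + 1) ≤ 3 * S + c := by simpa [smul_eq_mul] using this
      nlinarith
    -- total card forces each card = 3
    have hcardsum : (P.map Multiset.card).sum = 3 * m := by
      have := congrArg Multiset.card hPsum
      rw [card_msum, Multiset.card_map, hcard] at this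
      exact this
    have hcard3 : ∀ Z ∈ P, Z.card = 3 := by
      intro Z hZ
      have := all_eq_of_sum_eq (P.map Multiset.card) 3
        (by intro x hx; obtain ⟨W, hW, rfl⟩ := Multiset.mem_map.1 hx; exact hcardle W hW)
        (by rw [hcardsum, Multiset.card_map, hPcard]; ring)
      exact this Z.card (Multiset.mem_map_of_mem _ hZ)
    -- construct Q
    refine ⟨P.map (Multiset.map (fun x => x - S)), by simp [hPcard], ?_, ?_, ?_⟩
    · rw [sum_map_mmap, hPsum, Multiset.map_map]
      conv_rhs => rw [← Multiset.map_id Y]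
      exact Multiset.map_congr rfl (fun x _ => by simp)
    · intro Z hZ
      obtain ⟨Z1, hZ1, rfl⟩ := Multiset.mem_map.1 hZ
      rw [Multiset.card_map]; exact hcard3 Z1 hZ1
    · intro Z hZ W hW
      obtain ⟨Z1, hZ1, rfl⟩ := Multiset.mem_map.1 hZ
      obtain ⟨W1, hW1, rfl⟩ := Multiset.mem_map.1 hW
      have key : ∀ V ∈ P, (Multiset.map (fun x => x - S) V).sum = c := by
        intro V hV
        have hrec : V = (Multiset.map (fun x => x - S) V).map (fun a => a + S) := by
          rw [Multiset.map_map]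
          conv_lhs => rw [← Multiset.map_id V]
          exact Multiset.map_congr rfl (fun x hx => by
            have := (hZel V hV x hx).1; simp; omega)
        have hsum : V.sum = (Multiset.map (fun x => x - S) V).sum
            + (Multiset.map (fun x => x - S) V).card * S := by
          conv_lhs => rw [hrec]
          rw [map_add_sum]
        rw [hsumt V hV, htval, Multiset.card_map, hcard3 V hV] at hsum
        omega
      rw [key Z1 hZ1, key W1 hW1]
end

section
/- Let T₁, T₂ be metric trees and let C be a correspondence between them with distortion at most 2δ. Let s be an endpoint of a longest simple path (a diametral point) in T₁, and let (s,t) ∈ C. Then there exists a vertex z of T₂ with d₂(t,z) ≤ 8δ. -/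
/-- A correspondence between `X` and `Y`: both projections are surjective. -/
def IsCorrespondence {X Y : Type} (C : Set (X × Y)) : Prop :=
  (∀ x : X, ∃ y : Y, (x, y) ∈ C) ∧ (∀ y : Y, ∃ x : X, (x, y) ∈ C)

/-- The distortion `dis C = sup |ρ₁(x,x') - ρ₂(y,y')|` over pairs in `C`. -/
noncomputable def corDis {X Y : Type} (ρ₁ : X → X → ℝ) (ρ₂ : Y → Y → ℝ)
    (C : Set (X × Y)) : ENNReal :=
  ⨆ (p : C) (q : C), ENNReal.ofReal |ρ₁ p.1.1 q.1.1 - ρ₂ p.1.2 q.1.2|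

/-- The Gromov-Hausdorff distance `d_GH = (1/2) inf_C dis C`. -/
noncomputable def dGH {X Y : Type} (ρ₁ : X → X → ℝ) (ρ₂ : Y → Y → ℝ) : ENNReal :=
  (⨅ (C : {C : Set (X × Y) // IsCorrespondence C}), corDis ρ₁ ρ₂ C.1) / 2

/-- A metric tree: the geodesic realization of a finite tree.  `V` is the (finite) set of
tree nodes; every pair of points is joined by a geodesic; the space satisfies the
four-point (0-hyperbolicity) condition characterizing real trees; and every point lies
on the geodesic between the two endpoints of some edge (adjacent pair of vertices). -/
structure MetricTree (X : Type) where
  dist : X → X → ℝ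
  V : Set X
  V_finite : V.Finite
  dist_self : ∀ x, dist x x = 0
  dist_comm : ∀ x y, dist x y = dist y x
  dist_triangle : ∀ x y z, dist x z ≤ dist x y + dist y z
  eq_of_dist : ∀ x y, dist x y = 0 → x = y
  geodesic : ∀ x y, ∃ γ : ℝ → X, γ 0 = x ∧ γ (dist x y) = y ∧
    ∀ a ∈ Set.Icc 0 (dist x y), ∀ b ∈ Set.Icc 0 (dist x y), dist (γ a) (γ b) = |a - b|
  fourPoint : ∀ x y z w, dist x y + dist z w ≤ max (dist x z + dist y w) (dist x w + dist y z)
  edgeCover : ∀ x, ∃ u ∈ V, ∃ v ∈ V, dist u x + dist x v = dist u v ∧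
    ∀ w ∈ V, dist u w + dist w v = dist u v → w = u ∨ w = v

/-- if `C` is a correspondence between metric trees `T₁`, `T₂` with
distortion at most `2δ`, `s` is an endpoint of a longest simple path (diametral point)
of `T₁`, and `(s,t) ∈ C`, then some vertex `z` of `T₂` satisfies `d₂(t,z) ≤ 8δ`. -/
theorem stmt_5 {X Y : Type} (T₁ : MetricTree X) (T₂ : MetricTree Y)
    (δ : ℝ) (hδ : 0 ≤ δ)
    (C : Set (X × Y)) (hC : IsCorrespondence C)
    (hdis : corDis T₁.dist T₂.dist C ≤ ENNReal.ofReal (2 * δ))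
    (s : X) (hs : ∃ s' : X, ∀ x y : X, T₁.dist x y ≤ T₁.dist s s')
    (t : Y) (hst : (s, t) ∈ C) :
    ∃ z ∈ T₂.V, T₂.dist t z ≤ 8 * δ := by
  obtain ⟨s', hs'⟩ := hs
  obtain ⟨u, hu, v, hv, huv, -⟩ := T₂.edgeCover t
  obtain ⟨xu, hxu⟩ := hC.2 u
  obtain ⟨xv, hxv⟩ := hC.2 v
  -- distortion bound pointwise
  have key : ∀ p ∈ C, ∀ q ∈ C,
      |T₁.dist p.1 q.1 - T₂.dist p.2 q.2| ≤ 2 * δ := by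
    intro p hp q hq
    have h1 : ENNReal.ofReal |T₁.dist p.1 q.1 - T₂.dist p.2 q.2|
        ≤ ENNReal.ofReal (2 * δ) := by
      refine le_trans ?_ hdis
      exact le_iSup₂_of_le (⟨p, hp⟩ : C) (⟨q, hq⟩ : C) le_rfl
    exact (ENNReal.ofReal_le_ofReal_iff (by linarith)).mp h1
  -- tree fact in T₁: distances are dominated by max distance to a diametral endpoint
  have tree : ∀ x y : X, T₁.dist x y ≤ max (T₁.dist s x) (T₁.dist s y) := by
    intro x y
    have h4 := T₁.fourPoint x y s s'
    have hys' : T₁.dist y s' ≤ T₁.dist s s' := hs' y s'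
    have hxs' : T₁.dist x s' ≤ T₁.dist s s' := hs' x s'
    have hcx : T₁.dist x s = T₁.dist s x := T₁.dist_comm x s
    have hcy : T₁.dist y s = T₁.dist s y := T₁.dist_comm y s
    rcases le_max_iff.mp h4 with h | h
    · have : T₁.dist x y ≤ T₁.dist s x := by linarith
      exact le_trans this (le_max_left _ _)
    · have : T₁.dist x y ≤ T₁.dist s y := by linarith
      exact le_trans this (le_max_right _ _)
  have k1 := key _ hst _ hxu
  have k2 := key _ hst _ hxv
  have k3 := key _ hxu _ hxv
  simp only at k1 k2 k3
  have h1 : T₁.dist s xu ≤ T₂.dist t u + 2 * δ := by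
    have := abs_le.mp k1; linarith [this.2]
  have h2 : T₁.dist s xv ≤ T₂.dist t v + 2 * δ := by
    have := abs_le.mp k2; linarith [this.2]
  have h3 : T₂.dist u v ≤ T₁.dist xu xv + 2 * δ := by
    have := abs_le.mp k3; linarith [this.1]
  have htree := tree xu xv
  have hsum : T₂.dist t u + T₂.dist t v = T₂.dist u v := by
    have := T₂.dist_comm u t; linarith [huv]
  rcases le_total (T₂.dist t u) (T₂.dist t v) with h | h
  · refine ⟨u, hu, ?_⟩
    rcases max_cases (T₁.dist s xu) (T₁.dist s xv) with ⟨he, -⟩ | ⟨he, -⟩ <;>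
      rw [he] at htree <;> linarith
  · refine ⟨v, hv, ?_⟩
    rcases max_cases (T₁.dist s xu) (T₁.dist s xv) with ⟨he, -⟩ | ⟨he, -⟩ <;>
      rw [he] at htree <;> linarith
end
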